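/- For a Poisson random variable X with mean μ > 0 and positive integer q ≥ 2, the function μ ↦ (E[X_q])² / E[X_q(X_q-1)] is strictly increasing in μ, where X_q = min(X, q). -/

import Mathlib

/-!
Write `p n = e^{-μ} μ^n / n!`. Since `d/dμ p n = p (n - 1) - p n`, the derivative of `E[f X]` for
an `f` that is constant from `q` on is `E[f (X + 1) - f X; X < q]`; hence `E[X_q]' = P(X < q)` and
`E[X_q (X_q - 1)]' = 2 E[X; X < q]`. Stein's identity `E[X g X] = μ E[g (X + 1)]` gives
`E[X_q] = μ P(X < q) + q P(X > q)` and `E[X_q (X_q - 1)] = μ E[X; X < q] + q (q - 1) P(X > q)`.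
With these, the numerator of the derivative of the ratio factors as
`2 E[X_q] · q P(X > q) · E[q - 1 - X; X < q]`, which is positive for `q ≥ 2`.
-/

/-- The Poisson probability mass function with real mean parameter `μ`. -/
noncomputable def poissonPMF (μ : ℝ) (n : ℕ) : ℝ := Real.exp (-μ) * μ ^ n / n.factorial

open Finset

lemma poissonPMF_pos {μ : ℝ} (hμ : 0 < μ) (n : ℕ) : 0 < poissonPMF μ n := by
  unfold poissonPMF; positivity

lemma hasSum_poissonPMF (μ : ℝ) : HasSum (poissonPMF μ) 1 := by
  have := (NormedSpace.expSeries_div_hasSum_exp μ).mul_left (Real.exp (-μ))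
  rw [← Real.exp_eq_exp_ℝ, ← Real.exp_add, neg_add_cancel, Real.exp_zero] at this
  simp only [← mul_div_assoc] at this
  exact this

lemma succ_mul_poissonPMF_succ (μ : ℝ) (n : ℕ) :
    ((n : ℝ) + 1) * poissonPMF μ (n + 1) = μ * poissonPMF μ n := by
  have : (n.factorial : ℝ) ≠ 0 := by positivity
  simp only [poissonPMF, Nat.factorial_succ, Nat.cast_mul, Nat.cast_succ]
  field_simp
  ring

lemma hasDerivAt_poissonPMF_zero (μ : ℝ) :
    HasDerivAt (fun μ ↦ poissonPMF μ 0) (-poissonPMF μ 0) μ := by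
  simpa [poissonPMF] using (hasDerivAt_neg μ).exp

lemma hasDerivAt_poissonPMF_succ (μ : ℝ) (n : ℕ) :
    HasDerivAt (fun μ ↦ poissonPMF μ (n + 1)) (poissonPMF μ n - poissonPMF μ (n + 1)) μ := by
  refine (((hasDerivAt_neg μ).exp.mul (hasDerivAt_pow (n + 1) μ)).div_const
    ((n + 1).factorial : ℝ)).congr_deriv ?_
  have : (n.factorial : ℝ) ≠ 0 := by positivity
  simp only [poissonPMF, Nat.factorial_succ, Nat.cast_mul, Nat.cast_succ, Nat.add_sub_cancel]
  field_simp
  ring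

lemma sum_range_poissonPMF_lt_one {μ : ℝ} (hμ : 0 < μ) (N : ℕ) :
    ∑ n ∈ range N, poissonPMF μ n < 1 := by
  calc ∑ n ∈ range N, poissonPMF μ n
      < ∑ n ∈ range (N + 1), poissonPMF μ n := by
        rw [sum_range_succ]; linarith [poissonPMF_pos hμ N]
    _ ≤ 1 := (hasSum_poissonPMF μ).summable.sum_le_tsum _
          (fun n _ ↦ (poissonPMF_pos hμ n).le) |>.trans_eq (hasSum_poissonPMF μ).tsum_eq

/-- Truncated form of the Stein identity `E[X g(X)] = μ E[g(X + 1)]`. -/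
lemma sum_range_succ_mul_poissonPMF (μ : ℝ) (g : ℕ → ℝ) (q : ℕ) :
    ∑ n ∈ range (q + 1), n * g n * poissonPMF μ n
      = μ * ∑ n ∈ range q, g (n + 1) * poissonPMF μ n := by
  rw [sum_range_succ', mul_sum]
  simp only [CharP.cast_eq_zero, zero_mul, add_zero, Nat.cast_succ]
  refine sum_congr rfl fun n _ ↦ ?_
  linear_combination g (n + 1) * succ_mul_poissonPMF_succ μ n

lemma hasDerivAt_sum_range_succ_mul_poissonPMF (h : ℕ → ℝ) (μ : ℝ) (N : ℕ) :
    HasDerivAt (fun μ ↦ ∑ n ∈ range (N + 1), h n * poissonPMF μ n)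
      (∑ n ∈ range N, (h (n + 1) - h n) * poissonPMF μ n - h N * poissonPMF μ N) μ := by
  induction N with
  | zero => simpa using (hasDerivAt_poissonPMF_zero μ).const_mul (h 0)
  | succ N ih =>
    simp_rw [sum_range_succ _ (N + 1)]
    refine (ih.add ((hasDerivAt_poissonPMF_succ μ N).const_mul (h (N + 1)))).congr_deriv ?_
    rw [sum_range_succ]
    ring

section EventuallyConstant

variable {f : ℕ → ℝ} {c : ℝ} {N : ℕ}

lemma tsum_poissonPMF_mul_of_eq_const (hf : ∀ n, N ≤ n → f n = c) (μ : ℝ) :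
    ∑' n, poissonPMF μ n * f n
      = ∑ n ∈ range N, f n * poissonPMF μ n
        + c * (1 - ∑ n ∈ range N, poissonPMF μ n) := by
  have hvanish : ∀ n ∉ range N, (f n - c) * poissonPMF μ n = 0 := fun n hn ↦ by
    rw [hf n (by simpa using hn), sub_self, zero_mul]
  have := ((hasSum_poissonPMF μ).mul_left c).add (hasSum_sum_of_ne_finset_zero hvanish)
  rw [(this.congr_fun fun n ↦ by ring).tsum_eq]
  simp only [sub_mul, sum_sub_distrib, ← mul_sum]
  ring

lemma hasDerivAt_tsum_poissonPMF_mul_of_eq_const (hf : ∀ n, N ≤ n → f n = c) (μ : ℝ) :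
    HasDerivAt (fun μ ↦ ∑' n, poissonPMF μ n * f n)
      (∑ n ∈ range N, (f (n + 1) - f n) * poissonPMF μ n) μ := by
  have hsum : ∀ μ, ∑' n, poissonPMF μ n * f n
      = c + ∑ n ∈ range (N + 1), (f n - c) * poissonPMF μ n := fun μ ↦ by
    rw [tsum_poissonPMF_mul_of_eq_const hf, sum_range_succ, hf N le_rfl, sub_self, zero_mul,
      add_zero]
    simp only [sub_mul, sum_sub_distrib, ← mul_sum]
    ring
  simp_rw [hsum]
  simpa [hf N le_rfl] using
    (hasDerivAt_sum_range_succ_mul_poissonPMF (fun n ↦ f n - c) μ N).const_add c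

end EventuallyConstant

lemma sum_range_natCast_mul_poissonPMF_lt {μ : ℝ} (hμ : 0 < μ) {q : ℕ} (hq : 2 ≤ q) :
    ∑ n ∈ range q, n * poissonPMF μ n < (q - 1) * ∑ n ∈ range q, poissonPMF μ n := by
  rw [mul_sum]
  refine sum_lt_sum (fun n hn ↦ ?_) ⟨0, by simp; omega, ?_⟩
  · have : (n : ℝ) ≤ q - 1 := by
      rw [le_sub_iff_add_le]; exact_mod_cast mem_range.mp hn
    exact mul_le_mul_of_nonneg_right this (poissonPMF_pos hμ n).le
  · have : (1 : ℝ) < q := by exact_mod_cast hq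
    simpa using mul_pos (sub_pos.mpr this) (poissonPMF_pos hμ 0)

/-- `E[X_q]` for `X ~ Poisson(μ)` and `X_q = min(X, q)`. -/
noncomputable def truncatedMean (q : ℕ) (μ : ℝ) : ℝ :=
  ∑' n, poissonPMF μ n * min (n : ℝ) q

/-- `E[X_q (X_q - 1)]` for `X ~ Poisson(μ)` and `X_q = min(X, q)`. -/
noncomputable def truncatedFactorialMoment (q : ℕ) (μ : ℝ) : ℝ :=
  ∑' n, poissonPMF μ n * ((min n q).descFactorial 2 : ℝ)

section TruncatedMoments

variable (q : ℕ) (μ : ℝ)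

lemma truncatedMean_eq :
    truncatedMean q μ = μ * ∑ n ∈ range q, poissonPMF μ n
      + q * (1 - ∑ n ∈ range (q + 1), poissonPMF μ n) := by
  have hstein := sum_range_succ_mul_poissonPMF μ (fun _ ↦ 1) q
  simp only [mul_one, one_mul] at hstein
  rw [truncatedMean, tsum_poissonPMF_mul_of_eq_const (c := (q : ℝ)) (N := q + 1)
    (fun n hn ↦ min_eq_right (by exact_mod_cast (q.le_succ.trans hn))), ← hstein]
  congr 1
  refine sum_congr rfl fun n hn ↦ ?_
  rw [min_eq_left (by exact_mod_cast Nat.lt_succ_iff.mp (mem_range.mp hn))]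

lemma hasDerivAt_truncatedMean :
    HasDerivAt (truncatedMean q) (∑ n ∈ range q, poissonPMF μ n) μ := by
  refine (hasDerivAt_tsum_poissonPMF_mul_of_eq_const (c := (q : ℝ))
    (fun n hn ↦ min_eq_right (by exact_mod_cast hn)) μ).congr_deriv
    (sum_congr rfl fun n hn ↦ ?_)
  have hn : n + 1 ≤ q := mem_range.mp hn
  rw [min_eq_left (by exact_mod_cast hn), min_eq_left (by exact_mod_cast (n.le_succ.trans hn))]
  push_cast
  ring

lemma truncatedFactorialMoment_eq :
    truncatedFactorialMoment q μ = μ * ∑ n ∈ range q, n * poissonPMF μ n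
      + q * (q - 1) * (1 - ∑ n ∈ range (q + 1), poissonPMF μ n) := by
  have hstein := sum_range_succ_mul_poissonPMF μ (fun n ↦ n - 1) q
  simp only [Nat.cast_succ, add_sub_cancel_right] at hstein
  rw [truncatedFactorialMoment, tsum_poissonPMF_mul_of_eq_const (c := (q : ℝ) * (q - 1))
    (N := q + 1) (fun n hn ↦ by
      rw [min_eq_right (q.le_succ.trans hn), Nat.cast_descFactorial_two]), ← hstein]
  congr 1
  refine sum_congr rfl fun n hn ↦ ?_
  rw [min_eq_left (Nat.lt_succ_iff.mp (mem_range.mp hn)), Nat.cast_descFactorial_two]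

lemma hasDerivAt_truncatedFactorialMoment :
    HasDerivAt (truncatedFactorialMoment q) (2 * ∑ n ∈ range q, n * poissonPMF μ n) μ := by
  refine (hasDerivAt_tsum_poissonPMF_mul_of_eq_const (c := (q : ℝ) * (q - 1))
    (fun n hn ↦ by rw [min_eq_right hn, Nat.cast_descFactorial_two]) μ).congr_deriv ?_
  rw [mul_sum]
  refine sum_congr rfl fun n hn ↦ ?_
  have hn : n + 1 ≤ q := mem_range.mp hn
  rw [min_eq_left hn, min_eq_left (n.le_succ.trans hn), Nat.cast_descFactorial_two,
    Nat.cast_descFactorial_two]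
  push_cast
  ring

end TruncatedMoments

lemma exists_hasDerivAt_truncatedMean_sq_div_pos {q : ℕ} (hq : 2 ≤ q) {μ : ℝ}
    (hμ : 0 < μ) :
    ∃ d, 0 < d ∧
      HasDerivAt (fun μ ↦ truncatedMean q μ ^ 2 / truncatedFactorialMoment q μ) d μ := by
  set S₀ := ∑ n ∈ range q, poissonPMF μ n
  set S₁ := ∑ n ∈ range q, n * poissonPMF μ n
  set T := 1 - ∑ n ∈ range (q + 1), poissonPMF μ n
  have hT : 0 < T := sub_pos.mpr (sum_range_poissonPMF_lt_one hμ _)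
  have hS₀ : 0 < S₀ :=
    sum_pos (fun n _ ↦ poissonPMF_pos hμ n) (nonempty_range_iff.mpr (by omega))
  have hS₁ : 0 ≤ S₁ :=
    sum_nonneg fun n _ ↦ mul_nonneg n.cast_nonneg (poissonPMF_pos hμ n).le
  have hgap : 0 < (q - 1) * S₀ - S₁ := sub_pos.mpr (sum_range_natCast_mul_poissonPMF_lt hμ hq)
  have hq₁ : (0 : ℝ) < q - 1 := by rw [sub_pos]; exact_mod_cast hq
  have hA : truncatedMean q μ = μ * S₀ + q * T := truncatedMean_eq q μ
  have hB : truncatedFactorialMoment q μ = μ * S₁ + q * (q - 1) * T :=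
    truncatedFactorialMoment_eq q μ
  have hA_pos : 0 < truncatedMean q μ := by rw [hA]; positivity
  have hB_pos : 0 < truncatedFactorialMoment q μ := by rw [hB]; positivity
  refine ⟨2 * truncatedMean q μ * (q * T * ((q - 1) * S₀ - S₁))
    / truncatedFactorialMoment q μ ^ 2, by positivity, ?_⟩
  refine (((hasDerivAt_truncatedMean q μ).fun_pow 2).div
    (hasDerivAt_truncatedFactorialMoment q μ) hB_pos.ne').congr_deriv ?_
  congr 1
  rw [hA, hB]
  push_cast
  ring

/-- For `X ~ Poisson(μ)` and an integer `q ≥ 2`, the function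
`μ ↦ (E[X_q])² / E[X_q (X_q - 1)]` is strictly increasing on `μ > 0`,
where `X_q = min(X, q)`. -/
theorem stmt4 (q : ℕ) (hq : 2 ≤ q) :
    StrictMonoOn
      (fun μ : ℝ =>
        (∑' n : ℕ, poissonPMF μ n * (min n q : ℝ)) ^ 2 /
          (∑' n : ℕ, poissonPMF μ n * ((min n q).descFactorial 2 : ℝ)))
      (Set.Ioi 0) := by
  change StrictMonoOn (fun μ ↦ truncatedMean q μ ^ 2 / truncatedFactorialMoment q μ)
    (Set.Ioi 0)
  refine strictMonoOn_of_deriv_pos (convex_Ioi 0) (fun μ hμ ↦ ?_) (fun μ hμ ↦ ?_)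
  · obtain ⟨d, -, hd⟩ := exists_hasDerivAt_truncatedMean_sq_div_pos hq hμ
    exact hd.continuousAt.continuousWithinAt
  · rw [interior_Ioi] at hμ
    obtain ⟨d, hd_pos, hd⟩ := exists_hasDerivAt_truncatedMean_sq_div_pos hq hμ
    rwa [hd.deriv]
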